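/- Path-doubling decomposition (Tiskin): In a weighted directed graph, any shortest walk from u to v that uses at most 2l edges either uses at most l edges, or can be decomposed as a shortest walk from u to some intermediate vertex w using exactly l edges, followed by a walk from w to v using at most l edges; in tropical matrix terms, D^{(2l)} = min(D^{(l)}, E^{(l)} · D^{(l)}) entrywise, where D^{(r)}_{ij} is the shortest distance using at most r edges and E^{(l)} restricts D^{(l)} to pairs whose shortest ≤l-edge walk has exactly l edges (∞ elsewhere). -/

import Mathlib

open scoped Classical

/-- Minimum weight over walks from `j` to `i` with exactly `m` edges. -/
noncomputable def walkMin (n : ℕ) (A : Fin n → Fin n → WithTop ℤ) (m : ℕ)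
    (i j : Fin n) : WithTop ℤ :=
  Finset.univ.inf (fun v : Fin (m + 1) → Fin n =>
    if v 0 = j ∧ v (Fin.last m) = i then
      ∑ k : Fin m, A (v k.succ) (v k.castSucc)
    else ⊤)

/-- `D r i j`: minimum weight over walks from `j` to `i` with at most `r` edges. -/
noncomputable def hopDist (n : ℕ) (A : Fin n → Fin n → WithTop ℤ) (r : ℕ)
    (i j : Fin n) : WithTop ℤ :=
  (Finset.range (r + 1)).inf (fun m => walkMin n A m i j)

/-- `E l i j`: equals `D l i j` when the minimum over walks of at most `l` edges
from `j` to `i` is finite and attained only by walks of exactly `l` edges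
(every walk with fewer edges has strictly larger weight); `⊤` otherwise. -/
noncomputable def hopRestrict (n : ℕ) (A : Fin n → Fin n → WithTop ℤ) (l : ℕ)
    (i j : Fin n) : WithTop ℤ :=
  if hopDist n A l i j ≠ ⊤ ∧ ∀ m < l, hopDist n A l i j < walkMin n A m i j then
    hopDist n A l i j
  else ⊤

lemma walk_sum_split (n : ℕ) (A : Fin n → Fin n → WithTop ℤ) (a : ℕ)
    (v : Fin (a + 2) → Fin n) :
    ∑ t : Fin (a + 1), A (v t.succ) (v t.castSucc) =
      (∑ t : Fin a, A (v t.succ.castSucc) (v t.castSucc.castSucc)) +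
        A (v (Fin.last (a + 1))) (v (Fin.castSucc (Fin.last a))) := by
  rw [Fin.sum_univ_castSucc (f := fun t : Fin (a+1) => A (v t.succ) (v t.castSucc))]
  simp only [Fin.succ_castSucc, Fin.succ_last]

lemma walkMin_succ (n : ℕ) (A : Fin n → Fin n → WithTop ℤ) (a : ℕ) (i j : Fin n) :
    walkMin n A (a + 1) i j =
      Finset.univ.inf (fun k => A i k + walkMin n A a k j) := by
  refine le_antisymm (Finset.le_inf fun k _ => ?_) (Finset.le_inf fun v _ => ?_)
  · -- walkMin (a+1) i j ≤ A i k + walkMin a k j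
    haveI : Nonempty (Fin n) := ⟨k⟩
    by_cases hw : walkMin n A a k j = ⊤
    · simp [hw]
    obtain ⟨w, -, hweq⟩ := Finset.exists_mem_eq_inf (Finset.univ : Finset (Fin (a+1) → Fin n))
      Finset.univ_nonempty (fun v : Fin (a + 1) → Fin n =>
        if v 0 = j ∧ v (Fin.last a) = k then ∑ t : Fin a, A (v t.succ) (v t.castSucc) else ⊤)
    have hweq : walkMin n A a k j =
        if w 0 = j ∧ w (Fin.last a) = k then ∑ t : Fin a, A (w t.succ) (w t.castSucc) else ⊤ :=
      hweq
    by_cases hc : w 0 = j ∧ w (Fin.last a) = k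
    · rw [if_pos hc] at hweq
      have hle : walkMin n A (a + 1) i j ≤
          if (Fin.snoc w i : Fin (a+2) → Fin n) 0 = j ∧
              (Fin.snoc w i : Fin (a+2) → Fin n) (Fin.last (a+1)) = i then
            ∑ t : Fin (a+1), A ((Fin.snoc w i : Fin (a+2) → Fin n) t.succ)
              ((Fin.snoc w i : Fin (a+2) → Fin n) t.castSucc)
          else ⊤ :=
        Finset.inf_le (Finset.mem_univ _)
      have h0 : (Fin.snoc w i : Fin (a+2) → Fin n) 0 = j := by
        rw [← Fin.castSucc_zero, Fin.snoc_castSucc]; exact hc.1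
      rw [if_pos ⟨h0, Fin.snoc_last _ _⟩, walk_sum_split] at hle
      simp only [Fin.snoc_castSucc, Fin.snoc_last] at hle
      rw [hc.2, ← hweq] at hle
      exact le_trans hle (le_of_eq (add_comm _ _))
    · rw [if_neg hc] at hweq; exact absurd hweq hw
  · -- inf ≤ ite for walk v of a+1 edges
    by_cases hc : v 0 = j ∧ v (Fin.last (a+1)) = i
    swap
    · rw [if_neg hc]; exact le_top
    rw [if_pos hc]
    set k := v (Fin.castSucc (Fin.last a)) with hk
    have h1 : (Finset.univ.inf fun k => A i k + walkMin n A a k j) ≤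
        A i k + walkMin n A a k j := Finset.inf_le (Finset.mem_univ k)
    have h2 : walkMin n A a k j ≤
        ∑ t : Fin a, A (v t.succ.castSucc) (v t.castSucc.castSucc) := by
      have := Finset.inf_le (f := fun w : Fin (a + 1) → Fin n =>
        if w 0 = j ∧ w (Fin.last a) = k then ∑ t : Fin a, A (w t.succ) (w t.castSucc) else ⊤)
        (Finset.mem_univ (fun t : Fin (a+1) => v t.castSucc))
      simpa [walkMin, hc.1, hk] using this
    calc (Finset.univ.inf fun k => A i k + walkMin n A a k j)
        ≤ A i k + walkMin n A a k j := h1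
      _ ≤ A i k + ∑ t : Fin a, A (v t.succ.castSucc) (v t.castSucc.castSucc) :=
          add_le_add_right h2 _
      _ = ∑ t : Fin (a+1), A (v t.succ) (v t.castSucc) := by
          rw [walk_sum_split, ← hk, hc.2, add_comm]

lemma add_finsetInf {ι : Type*} (s : Finset ι) (hs : s.Nonempty) (c : WithTop ℤ)
    (f : ι → WithTop ℤ) : c + s.inf f = s.inf (fun x => c + f x) := by
  obtain ⟨b, hb, h⟩ := Finset.exists_mem_eq_inf s hs f
  refine le_antisymm (Finset.le_inf fun x hx => add_le_add_right (Finset.inf_le hx) c) ?_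
  calc s.inf (fun x => c + f x) ≤ c + f b := Finset.inf_le hb
  _ = c + s.inf f := by rw [h]

lemma finsetInf_add {ι : Type*} (s : Finset ι) (hs : s.Nonempty) (c : WithTop ℤ)
    (f : ι → WithTop ℤ) : s.inf f + c = s.inf (fun x => f x + c) := by
  rw [add_comm, add_finsetInf s hs]
  simp [add_comm]

lemma walkMin_zero (n : ℕ) (A : Fin n → Fin n → WithTop ℤ) (i j : Fin n) :
    walkMin n A 0 i j = if i = j then 0 else ⊤ := by
  unfold walkMin
  split_ifs with h
  · subst h
    refine le_antisymm ?_ (Finset.le_inf fun v _ => by split_ifs <;> simp)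
    refine le_trans (Finset.inf_le (Finset.mem_univ (fun _ => i))) ?_
    simp
  · rw [Finset.inf_eq_top_iff]
    intro v _
    rw [if_neg]
    rintro ⟨h0, h1⟩
    exact h (by rw [← h1, ← h0]; rfl)

lemma walkMin_add (n : ℕ) (A : Fin n → Fin n → WithTop ℤ) (a b : ℕ) (i j : Fin n) :
    walkMin n A (a + b) i j =
      Finset.univ.inf (fun k => walkMin n A a i k + walkMin n A b k j) := by
  haveI : Nonempty (Fin n) := ⟨i⟩
  induction a generalizing i with
  | zero =>
      simp only [Nat.zero_add]
      refine le_antisymm (Finset.le_inf fun k _ => ?_) ?_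
      · rw [walkMin_zero]
        by_cases h : i = k
        · subst h; rw [if_pos rfl, zero_add]
        · rw [if_neg h, top_add]; exact le_top
      · refine le_trans (Finset.inf_le (Finset.mem_univ i)) ?_
        rw [walkMin_zero, if_pos rfl, zero_add]
  | succ a ih =>
      have h1 : a + 1 + b = (a + b) + 1 := by omega
      rw [h1, walkMin_succ]
      have h2 : ∀ k : Fin n, A i k + walkMin n A (a + b) k j =
          Finset.univ.inf (fun k' => (A i k + walkMin n A a k k') + walkMin n A b k' j) := by
        intro k
        rw [ih k, add_finsetInf _ Finset.univ_nonempty]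
        congr 1; funext k'; rw [add_assoc]
      simp only [h2]
      rw [Finset.inf_comm]
      congr 1; funext k'
      rw [walkMin_succ, finsetInf_add _ Finset.univ_nonempty]

/-- Tiskin's path-doubling decomposition: any shortest walk of at most `2l`
edges either uses at most `l` edges, or decomposes as a shortest walk of
exactly `l` edges (through some intermediate vertex) followed by a walk of at
most `l` edges; tropically, `D^{(2l)} = min(D^{(l)}, E^{(l)} · D^{(l)})`. -/
theorem tiskin_path_doubling (n : ℕ) (A : Fin n → Fin n → WithTop ℤ)
    (l : ℕ) (i j : Fin n) :
    hopDist n A (2 * l) i j =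
      min (hopDist n A l i j)
        (Finset.univ.inf (fun k => hopRestrict n A l i k + hopDist n A l k j)) := by
  haveI : Nonempty (Fin n) := ⟨i⟩
  refine le_antisymm (le_min ?_ (Finset.le_inf fun k _ => ?_)) ?_
  · exact Finset.inf_mono (Finset.range_subset_range.2 (by omega))
  · -- hopDist 2l ≤ hopRestrict l i k + hopDist l k j
    have hR : hopDist n A l i k ≤ hopRestrict n A l i k := by
      unfold hopRestrict; split_ifs
      exacts [le_rfl, le_top]
    refine le_trans ?_ (add_le_add_left hR _)
    obtain ⟨m1, hm1, e1⟩ := Finset.exists_mem_eq_inf (Finset.range (l+1))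
      ⟨0, by simp⟩ (fun m => walkMin n A m i k)
    obtain ⟨m2, hm2, e2⟩ := Finset.exists_mem_eq_inf (Finset.range (l+1))
      ⟨0, by simp⟩ (fun m => walkMin n A m k j)
    have e1' : hopDist n A l i k = walkMin n A m1 i k := e1
    have e2' : hopDist n A l k j = walkMin n A m2 k j := e2
    rw [e1', e2']
    have hcat : walkMin n A (m1 + m2) i j ≤ walkMin n A m1 i k + walkMin n A m2 k j := by
      rw [walkMin_add]; exact Finset.inf_le (Finset.mem_univ k)
    refine le_trans ?_ hcat
    rw [Finset.mem_range] at hm1 hm2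
    exact Finset.inf_le (Finset.mem_range.2 (by omega))
  · -- min ≤ hopDist 2l
    set d := hopDist n A (2*l) i j with hd
    have hP : ∃ m, m < 2*l + 1 ∧ walkMin n A m i j = d := by
      obtain ⟨m, hm, e⟩ := Finset.exists_mem_eq_inf (Finset.range (2*l+1))
        ⟨0, by simp⟩ (fun m => walkMin n A m i j)
      exact ⟨m, Finset.mem_range.1 hm, e.symm⟩
    obtain ⟨hmlt, hmeq⟩ := Nat.find_spec hP
    set m := Nat.find hP with hm
    have hmin : ∀ m' , m' < m → ¬(m' < 2*l+1 ∧ walkMin n A m' i j = d) :=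
      fun m' h => Nat.find_min hP h
    by_cases hml : m ≤ l
    · refine le_trans (min_le_left _ _) ?_
      rw [← hmeq]
      exact Finset.inf_le (Finset.mem_range.2 (by omega))
    push_neg at hml
    by_cases hdtop : d = ⊤
    · exact hdtop ▸ le_top
    have hsplit : d = walkMin n A (l + (m - l)) i j := by
      rw [← hmeq]; congr 1; omega
    rw [walkMin_add] at hsplit
    obtain ⟨k, -, hk⟩ := Finset.exists_mem_eq_inf (Finset.univ : Finset (Fin n))
      Finset.univ_nonempty (fun k => walkMin n A l i k + walkMin n A (m-l) k j)
    set W2 := walkMin n A l i k with hW2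
    set W1 := walkMin n A (m-l) k j with hW1
    have hdW : d = W2 + W1 := by rw [hsplit, hk]
    have hW2top : W2 ≠ ⊤ := fun h => hdtop (by rw [hdW, h, top_add])
    have hW1top : W1 ≠ ⊤ := fun h => hdtop (by rw [hdW, h, add_top])
    have c1 : ∀ m', m' ≤ l → W2 ≤ walkMin n A m' i k := by
      intro m' hm'
      have h1 : walkMin n A (m' + (m - l)) i j ≤ walkMin n A m' i k + W1 := by
        rw [walkMin_add]; exact Finset.inf_le (Finset.mem_univ k)
      have h2 : d ≤ walkMin n A (m' + (m - l)) i j :=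
        Finset.inf_le (Finset.mem_range.2 (by omega))
      have h3 : W1 + W2 ≤ W1 + walkMin n A m' i k := by
        rw [add_comm W1 W2, add_comm W1 _, ← hdW]
        exact le_trans h2 h1
      exact (WithTop.add_le_add_iff_left hW1top).1 h3
    have hDl : hopDist n A l i k = W2 := by
      refine le_antisymm (Finset.inf_le (Finset.mem_range.2 (by omega))) ?_
      exact Finset.le_inf fun m' hm' => c1 m' (by
        rw [Finset.mem_range] at hm'; omega)
    have c3 : ∀ m' < l, hopDist n A l i k < walkMin n A m' i k := by
      intro m' hm'
      rw [hDl]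
      rcases lt_or_eq_of_le (c1 m' (le_of_lt hm')) with h | h
      · exact h
      exfalso
      have h1 : walkMin n A (m' + (m - l)) i j ≤ walkMin n A m' i k + W1 := by
        rw [walkMin_add]; exact Finset.inf_le (Finset.mem_univ k)
      rw [← h, ← hdW] at h1
      have h2 : d ≤ walkMin n A (m' + (m-l)) i j :=
        Finset.inf_le (Finset.mem_range.2 (by omega))
      exact hmin (m' + (m - l)) (by omega) ⟨by omega, le_antisymm h1 h2⟩
    have hE : hopRestrict n A l i k = W2 := by
      rw [hopRestrict, if_pos ⟨by rw [hDl]; exact hW2top, c3⟩, hDl]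
    refine le_trans (min_le_right _ _) ?_
    refine le_trans (Finset.inf_le (Finset.mem_univ k)) ?_
    rw [hE, hdW]
    exact add_le_add_right (Finset.inf_le (Finset.mem_range.2 (by omega))) _
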